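/- Under the hypotheses of the previous lemma (Φ an integer polynomial self-map of affine n-space, p sufficiently large, X ∈ V(ℤ_q) with x = X mod p, M such that Φ^M(X) ≡ X (mod p) and the tangent map of φ^M at x restricted to the tangent space of V(𝔽_q) at x is the identity): for every X' ∈ V(ℤ_q) with X' ≡ X (mod p), one has Φ^{pM}(X') ≡ X' (mod p²). -/
import Mathlib


open MvPolynomial

noncomputable section

/-- The substitution endomorphism `Φ* : f ↦ f ∘ Φ` of the polynomial ring `R[x₁,…,xₙ]`
induced by an `n`-tuple `Φ` of polynomials. -/
def substEnd (R : Type*) [CommRing R] {n : ℕ} (Φ : Fin n → MvPolynomial (Fin n) R) :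
    MvPolynomial (Fin n) R →ₐ[R] MvPolynomial (Fin n) R :=
  MvPolynomial.aeval Φ

/-- The ideal `I(V(R))`: the kernel of the `n`-th power `(Φ*)ⁿ` of the substitution
endomorphism. -/
def iterKer (R : Type*) [CommRing R] {n : ℕ} (Φ : Fin n → MvPolynomial (Fin n) R) :
    Ideal (MvPolynomial (Fin n) R) :=
  RingHom.ker (substEnd R Φ ^ n)

/-- The polynomial self-map of `Rⁿ` defined by an `n`-tuple of polynomials. -/
def polySelfMap {R : Type*} [CommRing R] {n : ℕ} (Φ : Fin n → MvPolynomial (Fin n) R) :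
    (Fin n → R) → (Fin n → R) :=
  fun v i => eval v (Φ i)

/-- `ℤ_q`: the ring of integers of the unramified extension of `ℚ_p` with residue field
`𝔽_q`, `q = p^k`, realized as the ring of Witt vectors of `𝔽_q`. -/
abbrev Zq (p k : ℕ) [Fact p.Prime] : Type _ := WittVector p (GaloisField p k)

section Aux

variable {R S : Type*} [CommRing R] [CommRing S] {n : ℕ}

lemma eval_substEnd (Φ : Fin n → MvPolynomial (Fin n) R) (f : MvPolynomial (Fin n) R)
    (v : Fin n → R) :
    eval v (substEnd R Φ f) = eval (polySelfMap Φ v) f := by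
  induction f using MvPolynomial.induction_on with
  | C a => simp [substEnd]
  | add p q hp hq => simp only [map_add, hp, hq]
  | mul_X p i hp =>
      simp only [map_mul]
      rw [hp]
      congr 1
      simp [substEnd, polySelfMap]

lemma eval_substEnd_pow (Φ : Fin n → MvPolynomial (Fin n) R) (m : ℕ)
    (f : MvPolynomial (Fin n) R) (v : Fin n → R) :
    eval v ((substEnd R Φ ^ m) f) = eval ((polySelfMap Φ)^[m] v) f := by
  induction m generalizing f with
  | zero => simp
  | succ m ih =>
      rw [pow_succ, AlgHom.mul_apply, ih, Function.iterate_succ_apply', eval_substEnd]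

lemma map_substEnd_pow (π : R →+* S) (Φ : Fin n → MvPolynomial (Fin n) R) (m : ℕ)
    (f : MvPolynomial (Fin n) R) :
    MvPolynomial.map π ((substEnd R Φ ^ m) f) =
      (substEnd S (fun i => MvPolynomial.map π (Φ i)) ^ m) (MvPolynomial.map π f) := by
  induction m generalizing f with
  | zero => simp
  | succ m ih =>
      rw [pow_succ, AlgHom.mul_apply, ih, pow_succ, AlgHom.mul_apply]
      congr 1
      induction f using MvPolynomial.induction_on with
      | C a => simp [substEnd]
      | add p q hp hq => simp only [map_add, hp, hq]
      | mul_X p i hp =>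
          simp only [map_mul]
          rw [hp]
          congr 1
          simp [substEnd]

lemma taylor_dvd (c : R) (G : MvPolynomial (Fin n) R) (v E : Fin n → R) :
    c ^ 2 ∣ eval (fun j => v j + c * E j) G -
      (eval v G + c * ∑ j : Fin n, eval v (pderiv j G) * E j) := by
  induction G using MvPolynomial.induction_on with
  | C a => simp
  | add f g hf hg =>
      obtain ⟨a, ha⟩ := hf; obtain ⟨b, hb⟩ := hg
      refine ⟨a + b, ?_⟩
      simp only [map_add, Finset.sum_add_distrib, add_mul] at *
      linear_combination ha + hb
  | mul_X f i hf =>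
      obtain ⟨d, hd⟩ := hf
      refine ⟨(∑ j : Fin n, eval v (pderiv j f) * E j) * E i + d * v i + c * d * E i, ?_⟩
      have hsum : ∑ j : Fin n, eval v (pderiv j (f * X i)) * E j =
          (∑ j : Fin n, eval v (pderiv j f) * E j) * v i + eval v f * E i := by
        simp only [pderiv_mul, map_add, map_mul, add_mul, Finset.sum_add_distrib,
          Finset.sum_mul]
        congr 1
        · exact Finset.sum_congr rfl fun j _ => by simp only [eval_X]; ring
        · classical
          rw [Finset.sum_eq_single i]
          · simp
          · intro j _ hji; simp [Pi.single_eq_of_ne hji.symm]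
          · simp
      rw [hsum]
      simp only [map_mul, eval_X]
      linear_combination (v i + c * E i) * hd

lemma iterKer_stable (Φ : Fin n → MvPolynomial (Fin n) R) (m : ℕ)
    {G : MvPolynomial (Fin n) R} (hG : G ∈ iterKer R Φ) :
    (substEnd R Φ ^ m) G ∈ iterKer R Φ := by
  rw [iterKer, RingHom.mem_ker] at *
  calc (substEnd R Φ ^ n) ((substEnd R Φ ^ m) G)
      = (substEnd R Φ ^ n * substEnd R Φ ^ m) G := rfl
    _ = (substEnd R Φ ^ m * substEnd R Φ ^ n) G := by rw [pow_mul_comm]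
    _ = (substEnd R Φ ^ m) ((substEnd R Φ ^ n) G) := rfl
    _ = 0 := by rw [hG, map_zero]

lemma eval_iterate_eq_zero (Φ : Fin n → MvPolynomial (Fin n) R) (m : ℕ)
    {W : Fin n → R} (hW : ∀ G ∈ iterKer R Φ, eval W G = 0) :
    ∀ G ∈ iterKer R Φ, eval ((polySelfMap Φ)^[m] W) G = 0 := by
  intro G hG
  have h := hW _ (iterKer_stable Φ m hG)
  rwa [eval_substEnd_pow] at h

lemma map_evalAux (π : R →+* S) (W : Fin n → R) (G : MvPolynomial (Fin n) R) :
    π (eval W G) = eval (fun i => π (W i)) (MvPolynomial.map π G) := by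
  induction G using MvPolynomial.induction_on with
  | C a => simp
  | add p q hp hq => simp [hp, hq]
  | mul_X p i hp => simp [hp]

end Aux

/-- Let `Φ` be an integer polynomial self-map of affine `n`-space, `p` a sufficiently large
prime (so that `I(V(𝔽_q)) = π_p(I(V(ℤ_q)))`), `X ∈ V(ℤ_q)` with reduction `x = π∘X`, and `M`
a positive integer such that `Φ^M(X) ≡ X (mod p)` and the tangent map of the reduction of
`Φ^M` mod `p` restricted to the Zariski tangent space of `V(𝔽_q)` at `x` is the identity.
Then for every `X' ∈ V(ℤ_q)` with `X' ≡ X (mod p)` one has `Φ^{pM}(X') ≡ X' (mod p²)`. -/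
theorem iterate_pM_fixed_mod_p_sq (n : ℕ) (Φ : Fin n → MvPolynomial (Fin n) ℤ)
    (p : ℕ) [Fact p.Prime] (k : ℕ) (hk : 1 ≤ k)
    (π : Zq p k →+* GaloisField p k) (hπ : Function.Surjective π)
    (hker : RingHom.ker π = Ideal.span {(p : Zq p k)})
    -- `p` is sufficiently large: `I(V(𝔽_q)) = π_p (I(V(ℤ_q)))`
    (hp : iterKer (GaloisField p k)
        (fun i => MvPolynomial.map (Int.castRingHom (GaloisField p k)) (Φ i)) =
      Ideal.map (MvPolynomial.map π)
        (iterKer (Zq p k) (fun i => MvPolynomial.map (Int.castRingHom (Zq p k)) (Φ i))))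
    -- the point `X ∈ V(ℤ_q)` and its reduction `x`
    (X : Fin n → Zq p k)
    (hX : ∀ G ∈ iterKer (Zq p k)
      (fun i => MvPolynomial.map (Int.castRingHom (Zq p k)) (Φ i)), eval X G = 0)
    (M : ℕ) (hM : 0 < M)
    -- `Φ^M(X) ≡ X (mod p)`
    (hfix : ∀ i, π ((polySelfMap
      (fun i => MvPolynomial.map (Int.castRingHom (Zq p k)) (Φ i)))^[M] X i) = π (X i))
    -- the tangent map of the reduction of `Φ^M`, restricted to the Zariski tangent space of
    -- `V(𝔽_q)` at `x = π ∘ X`, is the identity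
    (htan : ∀ y : Fin n → GaloisField p k,
      (∀ g ∈ iterKer (GaloisField p k)
          (fun i => MvPolynomial.map (Int.castRingHom (GaloisField p k)) (Φ i)),
        ∑ j : Fin n, eval (fun i => π (X i)) (pderiv j g) * y j = 0) →
      ∀ i : Fin n,
        ∑ j : Fin n, eval (fun i => π (X i))
          (pderiv j ((substEnd (GaloisField p k)
            (fun i => MvPolynomial.map (Int.castRingHom (GaloisField p k)) (Φ i)) ^ M)
              (MvPolynomial.X i))) * y j = y i) :
    ∀ X' : Fin n → Zq p k,
      (∀ G ∈ iterKer (Zq p k)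
        (fun i => MvPolynomial.map (Int.castRingHom (Zq p k)) (Φ i)), eval X' G = 0) →
      (∀ i, π (X' i) = π (X i)) →
      ∀ i, ((p : Zq p k) ^ 2) ∣
        ((polySelfMap
          (fun i => MvPolynomial.map (Int.castRingHom (Zq p k)) (Φ i)))^[p * M] X' i -
          X' i) := by
  classical
  intro X' hX' hred
  set ΦZ : Fin n → MvPolynomial (Fin n) (Zq p k) :=
    fun i => MvPolynomial.map (Int.castRingHom (Zq p k)) (Φ i) with hΦZdef
  set ΦF : Fin n → MvPolynomial (Fin n) (GaloisField p k) :=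
    fun i => MvPolynomial.map (Int.castRingHom (GaloisField p k)) (Φ i) with hΦFdef
  -- reduction of the polynomials
  have hmapΦ : ∀ i, MvPolynomial.map π (ΦZ i) = ΦF i := by
    intro i
    rw [hΦZdef, hΦFdef]
    simp only [MvPolynomial.map_map]
    rw [RingHom.ext_int (π.comp (Int.castRingHom (Zq p k)))
      (Int.castRingHom (GaloisField p k))]
  -- reduction of points commutes with the self-map
  have hredpsi : ∀ (m : ℕ) (W : Fin n → Zq p k) (i : Fin n),
      π ((polySelfMap ΦZ)^[m] W i) = (polySelfMap ΦF)^[m] (fun j => π (W j)) i := by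
    intro m
    induction m with
    | zero => intro W i; simp
    | succ m ih =>
        intro W i
        rw [Function.iterate_succ_apply', Function.iterate_succ_apply']
        have heq : (fun j => π ((polySelfMap ΦZ)^[m] W j)) =
            (polySelfMap ΦF)^[m] (fun j => π (W j)) := funext (ih W)
        simp only [polySelfMap]
        rw [map_evalAux, hmapΦ, heq]
  have hxX' : (fun i => π (X' i)) = fun i => π (X i) := funext hred
  set Y := (polySelfMap ΦZ)^[M] X' with hY
  have hYred : ∀ i, π (Y i) = π (X' i) := by
    intro i
    calc π (Y i) = (polySelfMap ΦF)^[M] (fun j => π (X' j)) i := hredpsi M X' i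
      _ = (polySelfMap ΦF)^[M] (fun j => π (X j)) i := by rw [hxX']
      _ = π ((polySelfMap ΦZ)^[M] X i) := (hredpsi M X i).symm
      _ = π (X i) := hfix i
      _ = π (X' i) := (hred i).symm
  have hkerdvd : ∀ a : Zq p k, π a = 0 → (p : Zq p k) ∣ a := by
    intro a ha
    have h : a ∈ RingHom.ker π := ha
    rw [hker, Ideal.mem_span_singleton] at h
    exact h
  have hπp : π (p : Zq p k) = 0 := by
    have h : (p : Zq p k) ∈ RingHom.ker π := by
      rw [hker]; exact Ideal.mem_span_singleton_self _
    exact h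
  have hE0 : ∀ i, ∃ e, Y i = X' i + (p : Zq p k) * e := by
    intro i
    obtain ⟨e, he⟩ := hkerdvd (Y i - X' i) (by rw [map_sub, hYred i, sub_self])
    exact ⟨e, by linear_combination he⟩
  choose E hEdef using hE0
  have hYeq : Y = fun j => X' j + (p : Zq p k) * E j := funext hEdef
  have hpne : (p : Zq p k) ≠ 0 := WittVector.p_nonzero p _
  have horb : ∀ m, ∀ G ∈ iterKer (Zq p k) ΦZ, eval ((polySelfMap ΦZ)^[m] X') G = 0 :=
    fun m => eval_iterate_eq_zero ΦZ m hX'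
  set x : Fin n → GaloisField p k := fun i => π (X i) with hx
  -- the reduced tangent vector `π ∘ E` is in the Zariski tangent space at `x`
  have htang : ∀ g ∈ iterKer (GaloisField p k) ΦF,
      eval x g = 0 ∧ ∑ j : Fin n, eval x (pderiv j g) * π (E j) = 0 := by
    intro g hg
    rw [hp, Ideal.map] at hg
    refine Submodule.span_induction ?_ ?_ ?_ ?_ hg
    · rintro _ ⟨G, hG, rfl⟩
      have hXG : eval X' G = 0 := hX' G hG
      constructor
      · rw [← hxX', ← map_evalAux, hXG, map_zero]
      · have h1 : ∀ j, eval x (pderiv j (MvPolynomial.map π G)) =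
            π (eval X' (pderiv j G)) := by
          intro j
          rw [← hxX', pderiv_map, ← map_evalAux]
        have h2 : ∑ j : Fin n, eval x (pderiv j (MvPolynomial.map π G)) * π (E j) =
            π (∑ j : Fin n, eval X' (pderiv j G) * E j) := by
          rw [map_sum]
          exact Finset.sum_congr rfl fun j _ => by rw [h1, map_mul]
        rw [h2]
        obtain ⟨d, hd⟩ := taylor_dvd (p : Zq p k) G X' E
        have hYG : eval (fun j => X' j + (p : Zq p k) * E j) G = 0 := by
          rw [← hYeq, hY]; exact horb M G hG
        rw [hYG, hXG] at hd
        have hcancel : (p : Zq p k) * (∑ j : Fin n, eval X' (pderiv j G) * E j) =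
            (p : Zq p k) * (-((p : Zq p k) * d)) := by linear_combination -hd
        have hS0 : (∑ j : Fin n, eval X' (pderiv j G) * E j) = -((p : Zq p k) * d) :=
          mul_left_cancel₀ hpne hcancel
        rw [hS0, map_neg, map_mul, hπp, zero_mul, neg_zero]
    · constructor <;> simp
    · intro a b _ _ ha hb
      constructor
      · rw [map_add, ha.1, hb.1, add_zero]
      · simp only [map_add, add_mul, Finset.sum_add_distrib]
        rw [ha.2, hb.2, add_zero]
    · intro r a _ ha
      rw [smul_eq_mul]
      constructor
      · rw [map_mul, ha.1, mul_zero]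
      · calc ∑ j : Fin n, eval x (pderiv j (r * a)) * π (E j)
            = ∑ j : Fin n, eval x r * (eval x (pderiv j a) * π (E j)) := by
              refine Finset.sum_congr rfl fun j _ => ?_
              rw [pderiv_mul, map_add, map_mul, map_mul, ha.1]; ring
          _ = eval x r * ∑ j : Fin n, eval x (pderiv j a) * π (E j) := by
              rw [Finset.mul_sum]
          _ = 0 := by rw [ha.2, mul_zero]
  have htanE : ∀ i : Fin n,
      ∑ j : Fin n, eval x (pderiv j ((substEnd (GaloisField p k) ΦF ^ M)
        (MvPolynomial.X i))) * π (E j) = π (E i) :=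
    htan (fun j => π (E j)) (fun g hg => (htang g hg).2)
  set P : Fin n → MvPolynomial (Fin n) (Zq p k) :=
    fun i => (substEnd (Zq p k) ΦZ ^ M) (MvPolynomial.X i) with hP
  have hmapP : ∀ i, MvPolynomial.map π (P i) =
      (substEnd (GaloisField p k) ΦF ^ M) (MvPolynomial.X i) := by
    intro i
    rw [hP]
    rw [map_substEnd_pow]
    rw [show (fun i => MvPolynomial.map π (ΦZ i)) = ΦF from funext hmapΦ,
      MvPolynomial.map_X]
  have hkeyS : ∀ i, (p : Zq p k) ∣ (∑ j : Fin n, eval X' (pderiv j (P i)) * E j) - E i := by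
    intro i
    apply hkerdvd
    rw [map_sub, map_sum]
    have h3 : ∀ j, π (eval X' (pderiv j (P i)) * E j) =
        eval x (pderiv j ((substEnd (GaloisField p k) ΦF ^ M)
          (MvPolynomial.X i))) * π (E j) := by
      intro j
      rw [map_mul, map_evalAux, hxX', ← hmapP, pderiv_map]
    rw [Finset.sum_congr rfl fun j _ => h3 j, htanE i, sub_self]
  have hevalP : ∀ (W : Fin n → Zq p k) (i : Fin n),
      eval W (P i) = (polySelfMap ΦZ)^[M] W i := by
    intro W i
    rw [hP, eval_substEnd_pow, eval_X]
  have main : ∀ m : ℕ, ∀ i : Fin n, (p : Zq p k) ^ 2 ∣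
      (polySelfMap ΦZ)^[m * M] X' i -
        (X' i + (m : Zq p k) * ((p : Zq p k) * E i)) := by
    intro m
    induction m with
    | zero => intro i; simp
    | succ m ih =>
        have hc : ∀ i, ∃ c, (polySelfMap ΦZ)^[m * M] X' i =
            X' i + (m : Zq p k) * ((p : Zq p k) * E i) + (p : Zq p k) ^ 2 * c :=
          fun i => (ih i).elim fun c hc => ⟨c, by linear_combination hc⟩
        choose c hcdef using hc
        set W := (polySelfMap ΦZ)^[m * M] X' with hW
        set D : Fin n → Zq p k :=
          fun j => (m : Zq p k) * E j + (p : Zq p k) * c j with hD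
        have hWD : W = fun j => X' j + (p : Zq p k) * D j := by
          funext j
          rw [hD]
          linear_combination hcdef j
        intro i
        have hit : (polySelfMap ΦZ)^[(m + 1) * M] X' i = eval W (P i) := by
          rw [hevalP W i, hW, ← Function.iterate_add_apply]
          congr 1
          ring
        obtain ⟨t, ht⟩ := taylor_dvd (p : Zq p k) (P i) X' D
        rw [← hWD] at ht
        have h1 : eval X' (P i) = X' i + (p : Zq p k) * E i := by
          rw [hevalP, ← hY, hEdef i]
        obtain ⟨s, hs⟩ := hkeyS i
        have hsplit : ∑ j : Fin n, eval X' (pderiv j (P i)) * D j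
            = (m : Zq p k) * (∑ j : Fin n, eval X' (pderiv j (P i)) * E j) +
              (p : Zq p k) * (∑ j : Fin n, eval X' (pderiv j (P i)) * c j) := by
          rw [Finset.mul_sum, Finset.mul_sum, ← Finset.sum_add_distrib]
          refine Finset.sum_congr rfl fun j _ => ?_
          rw [hD]; ring
        refine ⟨t + (m : Zq p k) * s + (∑ j : Fin n, eval X' (pderiv j (P i)) * c j), ?_⟩
        rw [hit]
        have hm1 : ((m + 1 : ℕ) : Zq p k) = (m : Zq p k) + 1 := by push_cast; ring
        rw [hm1]
        linear_combination ht + h1 + (p : Zq p k) * hsplit +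
          (p : Zq p k) * (m : Zq p k) * hs
  intro i
  obtain ⟨t, ht⟩ := main p i
  exact ⟨t + E i, by linear_combination ht⟩

end
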